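/- arXiv:1302.4266 — 2 statements merged into one kernel-verified Lean document; each statement's English description precedes it below -/
import Mathlib

section
/- In a threshold graph built by a sequence of union and join vertices (with at least two initial union vertices and at least one join vertex), a vertex's neighborhood is a clique if and only if it is a union vertex. -/
/-!
Vertices `x ≠ y` are adjacent exactly when the later of the two was added as a join vertex.
Hence the neighbours of a union vertex are later join vertices, pairwise adjacent; while a join
vertex `v ≥ 2` is adjacent to the two initial union vertices `0` and `1`, which are not adjacent
to each other.
-/

open SimpleGraph

/-- Add one vertex (with index `n`) to a graph on `Fin n`: if `b = true` the new vertex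
is a join (dominating) vertex, adjacent to all previous vertices; if `b = false` it is a
union (isolated) vertex, adjacent to none. -/
def addVertex (b : Bool) {n : ℕ} (G : SimpleGraph (Fin n)) : SimpleGraph (Fin (n + 1)) where
  Adj x y :=
    (∃ (hx : x.val < n) (hy : y.val < n), G.Adj ⟨x.val, hx⟩ ⟨y.val, hy⟩) ∨
      (b = true ∧ x ≠ y ∧ (x.val = n ∨ y.val = n))
  symm := by
    constructor
    rintro x y (⟨hx, hy, h⟩ | ⟨hb, hxy, hn⟩)
    · exact Or.inl ⟨hy, hx, h.symm⟩
    · exact Or.inr ⟨hb, hxy.symm, hn.symm⟩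
  loopless := by
    constructor
    rintro x (⟨hx, hy, h⟩ | ⟨_, hxy, _⟩)
    · exact G.loopless.irrefl _ h
    · exact hxy rfl

/-- The threshold graph built from a word over `{u, j}` (here `false = u`, `true = j`).
The *head* of the list is the last vertex added, so vertex `i : Fin w.length` was added
with character `w.getD (w.length - 1 - i) _`; vertex `0` is the first vertex added. -/
def buildGraph : (w : List Bool) → SimpleGraph (Fin w.length)
  | [] => ⊥
  | b :: w => addVertex b (buildGraph w)

def vertexLetter (w : List Bool) (i : ℕ) : Bool :=
  w.getD (w.length - 1 - i) true

lemma vertexLetter_cons_of_lt {b : Bool} {w : List Bool} {i : ℕ} (h : i < w.length) :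
    vertexLetter (b :: w) i = vertexLetter w i := by
  rw [vertexLetter, vertexLetter, List.length_cons,
    show w.length + 1 - 1 - i = (w.length - 1 - i) + 1 by omega, List.getD_cons_succ]

lemma vertexLetter_cons_length (b : Bool) (w : List Bool) :
    vertexLetter (b :: w) w.length = b := by
  simp [vertexLetter]

lemma vertexLetter_append_of_lt (r : List Bool) {l : List Bool} {i : ℕ} (h : i < l.length) :
    vertexLetter (r ++ l) i = vertexLetter l i := by
  rw [vertexLetter, vertexLetter, List.length_append,
    show r.length + l.length - 1 - i = r.length + (l.length - 1 - i) by omega,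
    List.getD_append_right _ _ _ _ (by omega), Nat.add_sub_cancel_left]

lemma buildGraph_adj (w : List Bool) (x y : Fin w.length) :
    (buildGraph w).Adj x y ↔ x ≠ y ∧ vertexLetter w (max x.val y.val) = true := by
  induction w with
  | nil => exact x.elim0
  | cons b w ih =>
    change (addVertex b (buildGraph w)).Adj x y ↔ _
    simp only [addVertex, ne_eq, Fin.ext_iff]
    rcases Nat.lt_or_ge (max x.val y.val) w.length with hm | hm
    · have hx : x.val < w.length := lt_of_le_of_lt (le_max_left _ _) hm
      have hy : y.val < w.length := lt_of_le_of_lt (le_max_right _ _) hm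
      simp only [ih, ne_eq, Fin.ext_iff, hy, exists_const, hx, List.length_cons,
        vertexLetter_cons_of_lt hm, or_iff_left_iff_imp, and_imp]
      omega
    · have hx : x.val < w.length + 1 := x.isLt
      have hy : y.val < w.length + 1 := y.isLt
      rw [show max x.val y.val = w.length by omega, vertexLetter_cons_length]
      constructor
      · rintro (⟨hx, hy, -⟩ | ⟨hb, hne, -⟩)
        · omega
        · exact ⟨hne, hb⟩
      · rintro ⟨hne, hb⟩
        exact Or.inr ⟨hb, hne, by omega⟩

lemma vertexLetter_eq_true_of_adj_of_vertexLetter_eq_false {w : List Bool}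
    {v x : Fin w.length} (hv : vertexLetter w v = false) (hvx : (buildGraph w).Adj v x) :
    vertexLetter w x = true := by
  obtain ⟨-, hmax⟩ := (buildGraph_adj w v x).1 hvx
  rcases le_total v.val x.val with hle | hle
  · rwa [max_eq_right hle] at hmax
  · rw [max_eq_left hle, hv] at hmax
    exact absurd hmax Bool.false_ne_true

lemma isClique_neighborSet_of_vertexLetter_eq_false {w : List Bool} {v : Fin w.length}
    (hv : vertexLetter w v = false) :
    (buildGraph w).IsClique ((buildGraph w).neighborSet v) := by
  intro x hx y hy hxy
  have hx := vertexLetter_eq_true_of_adj_of_vertexLetter_eq_false hv hx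
  have hy := vertexLetter_eq_true_of_adj_of_vertexLetter_eq_false hv hy
  refine (buildGraph_adj w x y).2 ⟨hxy, ?_⟩
  rcases le_total x.val y.val with hle | hle
  · rwa [max_eq_right hle]
  · rwa [max_eq_left hle]

lemma not_isClique_neighborSet_of_vertexLetter_eq_true {w : List Bool} {a b v : Fin w.length}
    (hab : a < b) (hbv : b < v) (hb : vertexLetter w b = false) (hv : vertexLetter w v = true) :
    ¬ (buildGraph w).IsClique ((buildGraph w).neighborSet v) := by
  have hav : a ∈ (buildGraph w).neighborSet v :=
    (buildGraph_adj w v a).2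
      ⟨(hab.trans hbv).ne', by rwa [max_eq_left (Fin.val_le_of_le (hab.trans hbv).le)]⟩
  have hbv' : b ∈ (buildGraph w).neighborSet v :=
    (buildGraph_adj w v b).2 ⟨hbv.ne', by rwa [max_eq_left (Fin.val_le_of_le hbv.le)]⟩
  intro hclique
  have := ((buildGraph_adj w a b).1 (hclique hav hbv' hab.ne)).2
  rw [max_eq_right (Fin.val_le_of_le hab.le), hb] at this
  exact Bool.false_ne_true this

/-- In a threshold graph whose building word begins with `uuj` (i.e. the first three
vertices added are union, union, join), a vertex's neighborhood is a clique iff the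
vertex is a union vertex. -/
theorem neighborhood_clique_iff_union (w : List Bool)
    (hw : ∃ r : List Bool, w = r ++ [true, false, false]) (v : Fin w.length) :
    (buildGraph w).IsClique ((buildGraph w).neighborSet v) ↔
      w.getD (w.length - 1 - v.val) true = false := by
  obtain ⟨r, rfl⟩ := hw
  have hlen : (r ++ [true, false, false]).length = r.length + 3 := by simp
  have union_of_lt_two (i : ℕ) (hi : i < 2) :
      vertexLetter (r ++ [true, false, false]) i = false := by
    rw [vertexLetter_append_of_lt r (hi.trans (by decide))]
    interval_cases i <;> rfl
  change _ ↔ vertexLetter _ v = false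
  refine ⟨fun hclique => ?_, isClique_neighborSet_of_vertexLetter_eq_false⟩
  by_contra hv
  rw [Bool.not_eq_false] at hv
  have hv2 : 2 ≤ v.val := by
    by_contra! hlt
    rw [union_of_lt_two v hlt] at hv
    exact Bool.false_ne_true hv
  exact not_isClique_neighborSet_of_vertexLetter_eq_true
    (a := ⟨0, by omega⟩) (b := ⟨1, by omega⟩)
    (Fin.mk_lt_mk.2 one_pos) (Fin.mk_lt_mk.2 hv2) (union_of_lt_two 1 one_lt_two) hv hclique
end

section
/- For every h ≥ 1 and n ≥ 2, every natural number i with 0 ≤ i < exp^(h)(t) can be represented by a rooted colored tree of height at most h−1 using t colors, where: numbers less than 2^t are single vertices colored by the subset of colors given by their binary representation, and a number with binary representation b_k...b_0 at a higher range is represented by a root whose children are the trees representing those indices j with b_j = 1; moreover this representation is injective. -/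
/-- Iterated exponential: `towerExp 0 n = n`, `towerExp (k+1) n = 2 ^ towerExp k n`
(so `towerExp 1 t = 2 ^ t`). -/
def towerExp : ℕ → ℕ → ℕ
  | 0, n => n
  | k + 1, n => 2 ^ towerExp k n

/-- Rooted trees in which every vertex is labeled by a set of colors from `Fin t`. -/
inductive ColTree (t : ℕ) : Type
  | node : Finset (Fin t) → List (ColTree t) → ColTree t

/-- The height of a rooted colored tree (a single vertex has height `0`). -/
def ColTree.height {t : ℕ} : ColTree t → ℕ
  | .node _ [] => 0
  | .node c (x :: xs) => max (x.height + 1) (ColTree.node c xs).height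

/-- The inductive tree representation of numbers using `t` colors: a number `j < 2 ^ t`
is a single vertex colored by the set of `1`-bit positions of `j`; a larger number is a
root (with no colors) whose children represent the bit positions `p` with bit `p` of `j`
equal to `1`.  The first argument is recursion fuel (bounding the recursion depth). -/
def repTree (t : ℕ) : ℕ → ℕ → ColTree t
  | 0, j => .node (Finset.univ.filter fun c : Fin t => j.testBit c.val) []
  | fuel + 1, j =>
    if j < 2 ^ t then .node (Finset.univ.filter fun c : Fin t => j.testBit c.val) []
    else .node ∅ (((List.range j).filter fun p => j.testBit p).map (repTree t fuel))

/-!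
Read a leaf as the number whose binary digits are its colours, and an inner vertex as
`∑ 2 ^ (value of a child)`. This `ColTree.value` undoes `repTree` on all of
`[0, exp^(h)(t))`, because every bit position of a number below `exp^(h+1)(t) = 2 ^ exp^(h)(t)`
lies below `exp^(h)(t)`; injectivity follows. The same observation gives the height bound by
induction on `h`.
-/

theorem towerExp_lt_succ (k n : ℕ) : towerExp k n < towerExp (k + 1) n :=
  Nat.lt_two_pow_self

theorem Nat.filter_range_testBit_eq_bitIndices (n : ℕ) :
    (List.range n).filter (n.testBit ·) = n.bitIndices :=
  ((List.sortedLT_range n).pairwise.filter _).sortedLT.eq_of_mem_iff Nat.bitIndices_sorted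
    fun p => by
      simpa using fun h => (Nat.lt_two_pow_self).trans_le (Nat.ge_two_pow_of_testBit h)

theorem Nat.lt_of_testBit_of_lt_two_pow {n m p : ℕ} (hn : n < 2 ^ m) (hp : n.testBit p) :
    p < m :=
  (Nat.pow_lt_pow_iff_right (by norm_num)).mp ((Nat.ge_two_pow_of_testBit hp).trans_lt hn)

theorem Nat.sum_two_pow_filter_testBit {t n : ℕ} (hn : n < 2 ^ t) :
    ∑ c ∈ Finset.univ.filter (fun c : Fin t => n.testBit c), 2 ^ (c : ℕ) = n := by
  have hbits : (Finset.univ.filter fun c : Fin t => n.testBit c).map Fin.valEmbedding =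
      n.bitIndices.toFinset := by
    ext p
    simp only [Finset.mem_map, Finset.mem_filter, Finset.mem_univ, true_and,
      Fin.valEmbedding_apply, List.mem_toFinset, Nat.mem_bitIndices]
    exact ⟨fun ⟨c, hc, hcp⟩ => hcp ▸ hc,
      fun hp => ⟨⟨p, Nat.lt_of_testBit_of_lt_two_pow hn hp⟩, hp, rfl⟩⟩
  simpa [← hbits] using Finset.sum_toFinset_bitIndices_two_pow n

namespace ColTree

variable {t : ℕ}

def value : ColTree t → ℕ
  | .node c [] => ∑ x ∈ c, 2 ^ (x : ℕ)
  | .node _ (x :: xs) => ((x :: xs).attach.map fun y => 2 ^ y.1.value).sum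
decreasing_by
  have := List.sizeOf_lt_of_mem y.2
  simp only [node.sizeOf_spec]
  omega

theorem value_leaf (c : Finset (Fin t)) : (node c []).value = ∑ x ∈ c, 2 ^ (x : ℕ) := by
  rw [value]

theorem value_node_empty (l : List (ColTree t)) :
    (node ∅ l).value = (l.map fun x => 2 ^ x.value).sum := by
  cases l with
  | nil => simp [value]
  | cons x xs =>
    rw [value]
    exact congrArg List.sum (List.attach_map_val (f := fun x : ColTree t => 2 ^ x.value))

theorem height_node_le (c : Finset (Fin t)) (l : List (ColTree t)) (k : ℕ)
    (h : ∀ x ∈ l, x.height ≤ k) : (node c l).height ≤ k + 1 := by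
  induction l with
  | nil => simp [height]
  | cons x xs ih =>
    simp only [height, max_le_iff, List.forall_mem_cons] at h ⊢
    exact ⟨by omega, ih h.2⟩

end ColTree

open ColTree

theorem repTree_of_lt (t fuel : ℕ) {n : ℕ} (hn : n < 2 ^ t) :
    repTree t fuel n = .node (Finset.univ.filter fun c : Fin t => n.testBit c) [] := by
  cases fuel <;> simp [repTree, hn]

theorem repTree_succ_of_le (t fuel : ℕ) {n : ℕ} (hn : 2 ^ t ≤ n) :
    repTree t (fuel + 1) n = .node ∅ (n.bitIndices.map (repTree t fuel)) := by
  simp [repTree, hn.not_gt, Nat.filter_range_testBit_eq_bitIndices]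

theorem value_repTree (t fuel : ℕ) {n : ℕ} (hn : n < towerExp (fuel + 1) t) :
    (repTree t fuel n).value = n := by
  induction fuel generalizing n with
  | zero => rw [repTree_of_lt t 0 hn, value_leaf, Nat.sum_two_pow_filter_testBit (t := t) hn]
  | succ k ih =>
    rcases lt_or_ge n (2 ^ t) with hlt | hge
    · rw [repTree_of_lt t _ hlt, value_leaf, Nat.sum_two_pow_filter_testBit hlt]
    · rw [repTree_succ_of_le t k hge, value_node_empty, List.map_map]
      conv_rhs => rw [← Nat.sum_map_two_pow_bitIndices n]
      exact congrArg List.sum <| List.map_congr_left fun p hp =>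
        congrArg (2 ^ ·) (ih (Nat.lt_of_testBit_of_lt_two_pow hn (Nat.mem_bitIndices.mp hp)))

theorem height_repTree_le (t fuel : ℕ) {n : ℕ} (hn : n < towerExp (fuel + 1) t) :
    (repTree t fuel n).height ≤ fuel := by
  induction fuel generalizing n with
  | zero => simp [repTree, height]
  | succ k ih =>
    rcases lt_or_ge n (2 ^ t) with hlt | hge
    · simp [repTree_of_lt t _ hlt, height]
    · rw [repTree_succ_of_le t k hge]
      refine height_node_le _ _ _ fun x hx => ?_
      obtain ⟨p, hp, rfl⟩ := List.mem_map.mp hx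
      exact ih (Nat.lt_of_testBit_of_lt_two_pow hn (Nat.mem_bitIndices.mp hp))

theorem repTree_injOn (t fuel : ℕ) :
    Set.InjOn (repTree t fuel) (Set.Iio (towerExp (fuel + 1) t)) :=
  Set.LeftInvOn.injOn (f₁' := value) fun _ hn => value_repTree t fuel hn

theorem repTree_height_and_injective_general (t h : ℕ) :
    (∀ i < towerExp h t, (repTree t (h - 1) i).height ≤ h - 1) ∧
      (∀ i < towerExp h t, ∀ j < towerExp h t,
        repTree t (h - 1) i = repTree t (h - 1) j → i = j) := by
  have hrange : ∀ i < towerExp h t, i < towerExp (h - 1 + 1) t := by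
    rcases h with _ | h
    · exact fun i hi => hi.trans (towerExp_lt_succ 0 t)
    · exact fun i hi => hi
  exact ⟨fun i hi => height_repTree_le t _ (hrange i hi),
    fun i hi j hj => repTree_injOn t _ (hrange i hi) (hrange j hj)⟩

/-- For every `h ≥ 1`, every number `i < exp^(h)(t)` is represented by a rooted
`t`-colored tree of height at most `h - 1`, and the representation is injective on this
range. -/
theorem repTree_height_and_injective (t h : ℕ) (ht : 1 ≤ t) (hh : 1 ≤ h) :
    (∀ i < towerExp h t, (repTree t (h - 1) i).height ≤ h - 1) ∧
      (∀ i < towerExp h t, ∀ j < towerExp h t,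
        repTree t (h - 1) i = repTree t (h - 1) j → i = j) :=
  repTree_height_and_injective_general t h
end
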